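/- For each ρ ∈ (−1, 1) with ρ ≠ 0, let δ_ρ: ℝ → ℝ be a measurable estimator, and suppose that limsup_{|ρ|↑1} A(δ_ρ, ρ)/(2 log((ρ^{−2}−1)^{−1})) ≤ 1. Then: (i) liminf_{|ρ|↑1} [sup_{μ ∈ ℝ} r(δ_ρ, μ)]/(2 log((ρ^{−2}−1)^{−1})) ≥ 1, so that for any Σ_U > 0 the worst-case risk Σ_U·(ρ²·sup_{μ} r(δ_ρ, μ) + 1 − ρ²) of the corresponding estimator in the bivariate Gaussian model is bounded below by a (1 + o(1)) term times 2·Σ_U·log((ρ^{−2}−1)^{−1}); and (ii) liminf_{|ρ|↑1} A(δ_ρ, ρ)/(2 log((ρ^{−2}−1)^{−1})) ≥ 1. -/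

import Mathlib

open MeasureTheory ProbabilityTheory Filter
open scoped ENNReal Topology

/-- Gaussian shift risk: `r(δ, μ) = E_{T ~ N(μ,1)}[(δ(T) − μ)²]`, valued in `[0,∞]`. -/
noncomputable def gShiftRisk (δ : ℝ → ℝ) (μ : ℝ) : ℝ≥0∞ :=
  ∫⁻ t, ENNReal.ofReal ((δ t - μ) ^ 2) ∂(gaussianReal μ 1)

/-- Bounded normal mean minimax risk for a real bound `τ ≥ 0`:
`r^BNM(τ) = inf_{δ measurable} sup_{μ ∈ [−τ, τ]} r(δ, μ)`. -/
noncomputable def rBNM (τ : ℝ) : ℝ≥0∞ :=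
  ⨅ δ : {f : ℝ → ℝ // Measurable f}, ⨆ μ ∈ Set.Icc (-τ) τ, gShiftRisk δ μ

/-- The adaptation objective
`A(δ̃, ρ) = sup_{b̃ ∈ ℝ} (r(δ̃, b̃) + ρ⁻² − 1)/(r^BNM(|b̃|) + ρ⁻² − 1)`. -/
noncomputable def adaptObj (ρ : ℝ) (δ : ℝ → ℝ) : ℝ≥0∞ :=
  ⨆ b : ℝ, (gShiftRisk δ b + ENNReal.ofReal ((ρ ^ 2)⁻¹ - 1)) /
    (rBNM |b| + ENNReal.ofReal ((ρ ^ 2)⁻¹ - 1))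

/-- Soft-thresholding estimator `δ_{S,λ}(t) = sign(t)·max{|t| − λ, 0}`. -/
noncomputable def softThresh (l t : ℝ) : ℝ := Real.sign t * max (|t| - l) 0

/-- Hard-thresholding estimator `δ_{H,λ}(t) = t·1{|t| > λ}`. -/
noncomputable def hardThresh (l t : ℝ) : ℝ := if l < |t| then t else 0

/-- Loss of efficiency under adaptation `A*(ρ) = inf_{δ̃ measurable} A(δ̃, ρ)`. -/
noncomputable def Astar (ρ : ℝ) : ℝ≥0∞ :=
  ⨅ δ : {f : ℝ → ℝ // Measurable f}, adaptObj ρ δ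

/-- Minimal worst-case adaptation regret over soft-thresholding estimators. -/
noncomputable def AstarS (ρ : ℝ) : ℝ≥0∞ :=
  ⨅ l ∈ Set.Ici (0 : ℝ), adaptObj ρ (softThresh l)

/-- Minimal worst-case adaptation regret over hard-thresholding estimators. -/
noncomputable def AstarH (ρ : ℝ) : ℝ≥0∞ :=
  ⨅ l ∈ Set.Ici (0 : ℝ), adaptObj ρ (hardThresh l)

/-- The normalization `2·log((ρ⁻² − 1)⁻¹)`, as an extended nonnegative real. -/
noncomputable def denomLog (ρ : ℝ) : ℝ≥0∞ :=
  ENNReal.ofReal (2 * Real.log (((ρ ^ 2)⁻¹ - 1)⁻¹))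

/-- The filter of `ρ` with `|ρ| → 1` from below (eventually `ρ ∈ (−1,1)` and `ρ ≠ 0`). -/
noncomputable def rhoFilter : Filter ℝ :=
  Filter.comap (fun ρ : ℝ => |ρ|) (𝓝[<] (1 : ℝ))

noncomputable def gdens (b t : ℝ) : ℝ≥0∞ := ENNReal.ofReal (Real.exp (b*t - b^2/2))

lemma gdens_meas (b : ℝ) : Measurable (gdens b) := by
  unfold gdens; fun_prop

lemma pdf_tilt (b t : ℝ) :
    gaussianPDF 0 1 t * gdens b t = gaussianPDF b 1 t := by
  unfold gdens gaussianPDF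
  rw [← ENNReal.ofReal_mul (gaussianPDFReal_nonneg _ _ _)]
  congr 1
  unfold gaussianPDFReal
  rw [mul_assoc, ← Real.exp_add]
  congr 1
  push_cast
  ring

lemma gaussian_tilt (b : ℝ) :
    gaussianReal b 1 = (gaussianReal 0 1).withDensity (gdens b) := by
  rw [gaussianReal_of_var_ne_zero b one_ne_zero, gaussianReal_of_var_ne_zero 0 one_ne_zero,
    ← withDensity_mul _ (measurable_gaussianPDF _ _) (gdens_meas b)]
  congr 1
  funext t
  exact (pdf_tilt b t).symm

lemma lintegral_gdens (b : ℝ) : ∫⁻ t, gdens b t ∂(gaussianReal 0 1) = 1 := by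
  have h1 : ((gaussianReal 0 1).withDensity (gdens b)) Set.univ = 1 := by
    rw [← gaussian_tilt b]; simp
  rw [withDensity_apply _ MeasurableSet.univ] at h1
  simpa using h1

lemma lintegral_exp_mul (a : ℝ) :
    ∫⁻ t, ENNReal.ofReal (Real.exp (a*t)) ∂(gaussianReal 0 1)
      = ENNReal.ofReal (Real.exp (a^2/2)) := by
  have hpt : ∀ t, ENNReal.ofReal (Real.exp (a*t))
      = ENNReal.ofReal (Real.exp (a^2/2)) * gdens a t := by
    intro t
    unfold gdens
    rw [← ENNReal.ofReal_mul (Real.exp_nonneg _), ← Real.exp_add]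
    ring_nf
  simp_rw [hpt]
  rw [lintegral_const_mul _ (gdens_meas a), lintegral_gdens, mul_one]

lemma chernoff_upper {y : ℝ} (hy : 0 ≤ y) :
    gaussianReal 0 1 {t | y ≤ t} ≤ ENNReal.ofReal (Real.exp (-y^2/2)) := by
  have hmeas : MeasurableSet {t : ℝ | y ≤ t} := measurableSet_Ici (a := y)
  have h1 : gaussianReal 0 1 {t | y ≤ t}
      = ∫⁻ t, Set.indicator {t : ℝ | y ≤ t} 1 t ∂(gaussianReal 0 1) :=
    (lintegral_indicator_one hmeas).symm
  rw [h1]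
  have hle : ∀ t, Set.indicator {t : ℝ | y ≤ t} 1 t
      ≤ ENNReal.ofReal (Real.exp (y*t - y^2)) := by
    intro t
    rw [Set.indicator_apply]
    split_ifs with ht
    · simp only [Pi.one_apply]
      rw [show (1:ℝ≥0∞) = ENNReal.ofReal 1 by simp]
      apply ENNReal.ofReal_le_ofReal
      rw [← Real.exp_zero]
      apply Real.exp_le_exp.2
      have ht' : y ≤ t := ht
      nlinarith
    · exact zero_le
  refine le_trans (lintegral_mono hle) ?_
  have hpt : ∀ t, ENNReal.ofReal (Real.exp (y*t - y^2))
      = ENNReal.ofReal (Real.exp (-y^2/2)) * gdens y t := by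
    intro t
    unfold gdens
    rw [← ENNReal.ofReal_mul (Real.exp_nonneg _), ← Real.exp_add]
    ring_nf
  simp_rw [hpt]
  rw [lintegral_const_mul _ (gdens_meas y), lintegral_gdens, mul_one]

lemma chernoff_lower {y : ℝ} (hy : 0 ≤ y) :
    gaussianReal 0 1 {t | t ≤ -y} ≤ ENNReal.ofReal (Real.exp (-y^2/2)) := by
  have hmeas : MeasurableSet {t : ℝ | t ≤ -y} := measurableSet_Iic (a := -y)
  have h1 : gaussianReal 0 1 {t | t ≤ -y}
      = ∫⁻ t, Set.indicator {t : ℝ | t ≤ -y} 1 t ∂(gaussianReal 0 1) :=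
    (lintegral_indicator_one hmeas).symm
  rw [h1]
  have hle : ∀ t, Set.indicator {t : ℝ | t ≤ -y} 1 t
      ≤ ENNReal.ofReal (Real.exp (-y*t - y^2)) := by
    intro t
    rw [Set.indicator_apply]
    split_ifs with ht
    · simp only [Pi.one_apply]
      rw [show (1:ℝ≥0∞) = ENNReal.ofReal 1 by simp]
      apply ENNReal.ofReal_le_ofReal
      rw [← Real.exp_zero]
      apply Real.exp_le_exp.2
      have ht' : t ≤ -y := ht
      nlinarith
    · exact zero_le
  refine le_trans (lintegral_mono hle) ?_
  have hpt : ∀ t, ENNReal.ofReal (Real.exp (-y*t - y^2))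
      = ENNReal.ofReal (Real.exp (-y^2/2)) * gdens (-y) t := by
    intro t
    unfold gdens
    rw [← ENNReal.ofReal_mul (Real.exp_nonneg _), ← Real.exp_add]
    ring_nf
  simp_rw [hpt]
  rw [lintegral_const_mul _ (gdens_meas (-y)), lintegral_gdens, mul_one]

lemma gaussian_map (m : ℝ) :
    gaussianReal m 1 = (gaussianReal 0 1).map (· + m) := by
  rw [gaussianReal_map_add_const (μ := 0) (v := 1) m, zero_add]

lemma tail_upper {m y : ℝ} (hy : m ≤ y) :
    gaussianReal m 1 {t | y ≤ t} ≤ ENNReal.ofReal (Real.exp (-(y-m)^2/2)) := by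
  have hs : MeasurableSet {t : ℝ | y ≤ t} := measurableSet_Ici
  rw [gaussian_map m, Measure.map_apply (measurable_add_const m) hs]
  have : (· + m) ⁻¹' {t : ℝ | y ≤ t} = {t : ℝ | y - m ≤ t} := by
    ext t; simp only [Set.mem_preimage, Set.mem_setOf_eq]; constructor <;> intro h <;> linarith
  rw [this]
  exact chernoff_upper (by linarith)

lemma tail_lower {m y : ℝ} (hy : y ≤ m) :
    gaussianReal m 1 {t | t ≤ y} ≤ ENNReal.ofReal (Real.exp (-(m-y)^2/2)) := by
  have hs : MeasurableSet {t : ℝ | t ≤ y} := measurableSet_Iic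
  rw [gaussian_map m, Measure.map_apply (measurable_add_const m) hs]
  have : (· + m) ⁻¹' {t : ℝ | t ≤ y} = {t : ℝ | t ≤ -(m - y)} := by
    ext t; simp only [Set.mem_preimage, Set.mem_setOf_eq]; constructor <;> intro h <;> linarith
  rw [this]
  exact chernoff_lower (by linarith)

lemma lintegral_CS (μ : Measure ℝ) (f g : ℝ → ℝ≥0∞) (hf : Measurable f) (hg : Measurable g) :
    (∫⁻ t, f t * g t ∂μ)^2 ≤ (∫⁻ t, (f t)^2 ∂μ) * (∫⁻ t, (g t)^2 ∂μ) := by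
  have hpq : Real.HolderConjugate 2 2 := by constructor <;> norm_num
  have h := ENNReal.lintegral_mul_le_Lp_mul_Lq μ hpq hf.aemeasurable hg.aemeasurable
  simp only [Pi.mul_apply] at h
  have h2 : ∀ x : ℝ≥0∞, x ^ (2:ℝ) = x ^ 2 := fun x => by
    rw [show (2:ℝ) = ((2:ℕ):ℝ) by norm_num, ENNReal.rpow_natCast]
  simp only [h2] at h
  calc (∫⁻ t, f t * g t ∂μ)^2
      ≤ ((∫⁻ t, (f t)^2 ∂μ) ^ (1/2:ℝ) * (∫⁻ t, (g t)^2 ∂μ) ^ (1/2:ℝ))^2 := by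
        exact pow_le_pow_left' h 2
    _ = (∫⁻ t, (f t)^2 ∂μ) * (∫⁻ t, (g t)^2 ∂μ) := by
        rw [mul_pow, ← ENNReal.rpow_natCast (_ ^ (1/2:ℝ)) 2, ← ENNReal.rpow_natCast (_ ^ (1/2:ℝ)) 2,
          ← ENNReal.rpow_mul, ← ENNReal.rpow_mul]
        norm_num

lemma cosh_lb (y : ℝ) : 1 + y^2/2 ≤ Real.cosh y := by
  have h := Real.hasSum_cosh y
  have h2 := sum_le_hasSum (Finset.range 2)
    (fun i _ => by
      have hp : y ^ (2*i) = (y^2)^i := by rw [pow_mul]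
      rw [hp]; positivity) h
  rw [Finset.sum_range_succ, Finset.sum_range_one] at h2
  norm_num [Nat.factorial] at h2
  linarith

lemma ofReal_sq_le (y : ℝ) : (ENNReal.ofReal y)^2 ≤ ENNReal.ofReal (y^2) := by
  rcases le_or_gt 0 y with hy | hy
  · rw [← ENNReal.ofReal_pow hy]
  · rw [ENNReal.ofReal_of_nonpos hy.le]
    simpa using zero_le _

lemma sq_moment_le {a : ℝ} (ha : 0 < a) (ha2 : a^2 ≤ 2) :
    ∫⁻ t, ENNReal.ofReal (t^2) ∂(gaussianReal 0 1) ≤ ENNReal.ofReal (1 + (3/8)*a^2) := by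
  have ha2' : (0:ℝ) < a^2 := by positivity
  -- pointwise bound
  have hpt : ∀ t : ℝ, ENNReal.ofReal (t^2) + ENNReal.ofReal (2/a^2)
      ≤ ENNReal.ofReal (Real.exp (a*t) * (a^2)⁻¹) + ENNReal.ofReal (Real.exp (-a*t) * (a^2)⁻¹) := by
    intro t
    rw [← ENNReal.ofReal_add (by positivity) (by positivity),
      ← ENNReal.ofReal_add (by positivity) (by positivity)]
    apply ENNReal.ofReal_le_ofReal
    have hcosh := cosh_lb (a*t)
    rw [Real.cosh_eq] at hcosh
    have hkey : a^2*t^2 + 2 ≤ Real.exp (a*t) + Real.exp (-(a*t)) := by nlinarith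
    simp only [neg_mul]
    calc t^2 + 2/a^2 = (a^2*t^2 + 2)/a^2 := by field_simp
      _ ≤ (Real.exp (a*t) + Real.exp (-(a*t)))/a^2 := (div_le_div_iff_of_pos_right ha2').mpr hkey
      _ = Real.exp (a*t) * (a^2)⁻¹ + Real.exp (-(a*t)) * (a^2)⁻¹ := by
          field_simp
  have hL : ∫⁻ t, (ENNReal.ofReal (t^2) + ENNReal.ofReal (2/a^2)) ∂(gaussianReal 0 1)
      = (∫⁻ t, ENNReal.ofReal (t^2) ∂(gaussianReal 0 1)) + ENNReal.ofReal (2/a^2) := by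
    rw [lintegral_add_right _ measurable_const, lintegral_const, measure_univ, mul_one]
  have e1 : ∀ (b : ℝ), ∫⁻ t, ENNReal.ofReal (Real.exp (b*t) * (a^2)⁻¹) ∂(gaussianReal 0 1)
      = ENNReal.ofReal (Real.exp (b^2/2) * (a^2)⁻¹) := by
    intro b
    simp_rw [ENNReal.ofReal_mul (Real.exp_nonneg _)]
    rw [lintegral_mul_const _ (by fun_prop), lintegral_exp_mul]
  have hR : ∫⁻ t, (ENNReal.ofReal (Real.exp (a*t) * (a^2)⁻¹)
        + ENNReal.ofReal (Real.exp (-a*t) * (a^2)⁻¹)) ∂(gaussianReal 0 1)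
      = ENNReal.ofReal (Real.exp (a^2/2) * (a^2)⁻¹) + ENNReal.ofReal (Real.exp (a^2/2) * (a^2)⁻¹) := by
    rw [lintegral_add_left (by fun_prop), e1 a]
    have := e1 (-a)
    simp only [neg_sq] at this
    rw [this]
  have hmain : (∫⁻ t, ENNReal.ofReal (t^2) ∂(gaussianReal 0 1)) + ENNReal.ofReal (2/a^2)
      ≤ ENNReal.ofReal (2 * (Real.exp (a^2/2) * (a^2)⁻¹)) := by
    rw [← hL]
    refine le_trans (lintegral_mono hpt) ?_
    rw [hR, ← ENNReal.ofReal_add (by positivity) (by positivity)]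
    apply ENNReal.ofReal_le_ofReal
    ring_nf
    exact le_refl _
  have hsub := ENNReal.le_sub_of_add_le_right (by simp) hmain
  refine le_trans hsub ?_
  rw [← ENNReal.ofReal_sub _ (by positivity)]
  apply ENNReal.ofReal_le_ofReal
  have hx : |a^2/2| ≤ 1 := by rw [abs_of_nonneg (by positivity)]; linarith
  have hexp := Real.exp_bound hx (n := 2) (by norm_num)
  rw [show (∑ i ∈ Finset.range 2, (a^2/2) ^ i / (Nat.factorial i : ℝ)) = 1 + a^2/2 by
    norm_num [Finset.sum_range_succ, Nat.factorial]] at hexp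
  have hexp2 : Real.exp (a^2/2) ≤ 1 + a^2/2 + (3/4)*(a^2/2)^2 := by
    have h2 := abs_le.1 hexp
    have h3 : |a^2/2|^2 * ((2:ℕ).succ / ((Nat.factorial 2 : ℝ) * 2)) = (3/4)*(a^2/2)^2 := by
      rw [abs_of_nonneg (by positivity)]
      norm_num [Nat.factorial]
      ring
    nlinarith [h2.2]
  have h9 : (a^2)⁻¹ * a^2 = 1 := inv_mul_cancel₀ (ne_of_gt ha2')
  have h10 : (2:ℝ)/a^2 = 2 * (a^2)⁻¹ := by field_simp
  rw [h10]
  nlinarith [mul_pos (inv_pos.2 ha2') ha2']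

lemma gShiftRisk_id (m : ℝ) :
    gShiftRisk (fun t => t) m = ∫⁻ t, ENNReal.ofReal (t^2) ∂(gaussianReal 0 1) := by
  unfold gShiftRisk
  rw [gaussian_map m, lintegral_map (by fun_prop) (measurable_add_const m)]
  simp

lemma rBNM_zero : rBNM 0 = 0 := by
  apply le_antisymm _ zero_le
  refine le_trans (iInf_le _ ⟨(fun _ => 0), measurable_const⟩) ?_
  refine iSup₂_le fun μ hμ => ?_
  have hμ0 : μ = 0 := le_antisymm (by simpa using hμ.2) (by simpa using hμ.1)
  subst hμ0
  unfold gShiftRisk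
  simp

lemma rBNM_le_one_add {τ ε' : ℝ} (hε : 0 < ε') (hε1 : ε' ≤ 1) :
    rBNM τ ≤ ENNReal.ofReal (1 + ε') := by
  refine le_trans (iInf_le _ ⟨(fun t => t), measurable_id⟩) ?_
  refine iSup₂_le fun μ _ => ?_
  rw [gShiftRisk_id]
  set a : ℝ := Real.sqrt (min (8*ε'/3) 2) with ha
  have hmin : (0:ℝ) < min (8*ε'/3) 2 := by positivity
  have ha0 : 0 < a := Real.sqrt_pos.2 hmin
  have ha2 : a^2 = min (8*ε'/3) 2 := Real.sq_sqrt hmin.le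
  refine le_trans (sq_moment_le ha0 (by rw [ha2]; exact min_le_right _ _)) ?_
  apply ENNReal.ofReal_le_ofReal
  have : (3/8) * a^2 ≤ ε' := by
    rw [ha2]
    calc (3/8) * min (8*ε'/3) 2 ≤ (3/8) * (8*ε'/3) := by
          apply mul_le_mul_of_nonneg_left (min_le_left _ _) (by norm_num)
      _ = ε' := by ring
  linarith

lemma key_lemma (f : ℝ → ℝ) (hf : Measurable f) (b η R : ℝ) (hη : 0 ≤ η) (hηb : η ≤ b)
    (hR : 0 ≤ R) (h0 : gShiftRisk f 0 ≤ ENNReal.ofReal (R^2))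
    (hx : 0 ≤ b*(1 - Real.exp (-η^2/2)) - R * Real.exp (b^2/2 - (b-η)^2/4)) :
    ENNReal.ofReal ((b*(1 - Real.exp (-η^2/2)) - R * Real.exp (b^2/2 - (b-η)^2/4))^2)
      ≤ gShiftRisk f b := by
  have hb : 0 ≤ b := le_trans hη hηb
  set ν := gaussianReal b 1 with hν
  set A : Set ℝ := {t | t ≤ b + η} with hAdef
  have hA : MeasurableSet A := measurableSet_Iic
  set J := ∫⁻ t, ENNReal.ofReal (b - f t) ∂(ν.restrict A) with hJdef
  set II := ∫⁻ t, ENNReal.ofReal (f t) ∂(ν.restrict A) with hIdef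
  set e₁ : ℝ := Real.exp (-η^2/2) with he₁
  set T : ℝ := R * Real.exp (b^2/2 - (b-η)^2/4) with hT
  have hT0 : 0 ≤ T := by positivity
  -- step a
  have stepa : ENNReal.ofReal b * ν A ≤ J + II := by
    have hpt : ∀ t : ℝ, ENNReal.ofReal b ≤ ENNReal.ofReal (b - f t) + ENNReal.ofReal (f t) := by
      intro t
      calc ENNReal.ofReal b = ENNReal.ofReal ((b - f t) + f t) := by ring_nf
        _ ≤ _ := ENNReal.ofReal_add_le
    calc ENNReal.ofReal b * ν A = ∫⁻ _, ENNReal.ofReal b ∂(ν.restrict A) := by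
          rw [lintegral_const, Measure.restrict_apply_univ]
      _ ≤ ∫⁻ t, (ENNReal.ofReal (b - f t) + ENNReal.ofReal (f t)) ∂(ν.restrict A) :=
          lintegral_mono hpt
      _ = J + II := lintegral_add_left (by fun_prop) _
  -- step c : lower bound on ν A
  have hνA : ENNReal.ofReal (1 - e₁) ≤ ν A := by
    have htot : ν A + ν Aᶜ = 1 := by
      rw [measure_add_measure_compl hA]; exact measure_univ
    have hcompl : ν Aᶜ ≤ ENNReal.ofReal e₁ := by
      have hsub : Aᶜ ⊆ {t : ℝ | b + η ≤ t} := by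
        intro t ht
        simp only [hAdef, Set.mem_compl_iff, Set.mem_setOf_eq, not_le] at ht ⊢
        linarith
      refine le_trans (measure_mono hsub) ?_
      have := tail_upper (m := b) (y := b + η) (by linarith)
      rwa [show b + η - b = η by ring] at this
    have h1 : (1:ℝ≥0∞) - ENNReal.ofReal e₁ ≤ ν A := by
      rw [tsub_le_iff_right]
      calc (1:ℝ≥0∞) = ν A + ν Aᶜ := htot.symm
        _ ≤ ν A + ENNReal.ofReal e₁ := add_le_add_right hcompl _
    calc ENNReal.ofReal (1 - e₁) = 1 - ENNReal.ofReal e₁ := by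
          rw [ENNReal.ofReal_sub _ (Real.exp_nonneg _), ENNReal.ofReal_one]
      _ ≤ ν A := h1
  -- step b : J^2 ≤ risk at b
  have stepb : J^2 ≤ gShiftRisk f b := by
    have hCS := lintegral_CS (ν.restrict A) (fun t => ENNReal.ofReal (b - f t))
      (fun _ => 1) (by fun_prop) measurable_const
    simp only [mul_one, one_pow] at hCS
    have h2 : ∫⁻ t, (ENNReal.ofReal (b - f t))^2 ∂(ν.restrict A) ≤ gShiftRisk f b := by
      refine le_trans (lintegral_mono (fun t => ?_)) (lintegral_mono' Measure.restrict_le_self le_rfl)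
      calc (ENNReal.ofReal (b - f t))^2 ≤ ENNReal.ofReal ((b - f t)^2) := ofReal_sq_le _
        _ = ENNReal.ofReal ((f t - b)^2) := by rw [show (b - f t)^2 = (f t - b)^2 by ring]
    have h3 : ∫⁻ _, (1:ℝ≥0∞) ∂(ν.restrict A) ≤ 1 := by
      rw [lintegral_one, Measure.restrict_apply_univ]
      exact le_trans (measure_mono (Set.subset_univ A)) measure_univ.le
    calc J^2 ≤ (∫⁻ t, (ENNReal.ofReal (b - f t))^2 ∂(ν.restrict A))
          * (∫⁻ _, (1:ℝ≥0∞) ∂(ν.restrict A)) := hCS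
      _ ≤ gShiftRisk f b * 1 := mul_le_mul' h2 h3
      _ = gShiftRisk f b := mul_one _
  -- step d : II ≤ ofReal T
  have stepd : II ≤ ENNReal.ofReal T := by
    have hres : ν.restrict A = ((gaussianReal 0 1).restrict A).withDensity (gdens b) := by
      rw [hν, gaussian_tilt b, restrict_withDensity hA]
    have hI2 : II = ∫⁻ t, ENNReal.ofReal (f t) * gdens b t ∂((gaussianReal 0 1).restrict A) := by
      rw [hIdef, hres, lintegral_withDensity_eq_lintegral_mul _ (gdens_meas b) (by fun_prop)]
      simp only [Pi.mul_apply]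
      congr 1
      funext t
      ring
    have hCS2 := lintegral_CS ((gaussianReal 0 1).restrict A)
      (fun t => ENNReal.ofReal (f t)) (gdens b) (by fun_prop) (gdens_meas b)
    rw [← hI2] at hCS2
    have hfirst : ∫⁻ t, (ENNReal.ofReal (f t))^2 ∂((gaussianReal 0 1).restrict A)
        ≤ ENNReal.ofReal (R^2) := by
      refine le_trans ?_ h0
      unfold gShiftRisk
      refine le_trans (lintegral_mono (fun t => ?_)) (lintegral_mono' Measure.restrict_le_self le_rfl)
      calc (ENNReal.ofReal (f t))^2 ≤ ENNReal.ofReal ((f t)^2) := ofReal_sq_le _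
        _ = ENNReal.ofReal ((f t - 0)^2) := by rw [sub_zero]
    have hgd : ∀ t : ℝ, (gdens b t)^2 = ENNReal.ofReal (Real.exp (b^2)) * gdens (2*b) t := by
      intro t
      unfold gdens
      rw [← ENNReal.ofReal_pow (Real.exp_nonneg _), ← ENNReal.ofReal_mul (Real.exp_nonneg _)]
      congr 1
      rw [pow_two, ← Real.exp_add, ← Real.exp_add]
      congr 1
      ring
    have hsecond : ∫⁻ t, (gdens b t)^2 ∂((gaussianReal 0 1).restrict A)
        ≤ ENNReal.ofReal (Real.exp (b^2)) * ENNReal.ofReal (Real.exp (-(b-η)^2/2)) := by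
      simp_rw [hgd]
      rw [lintegral_const_mul _ (gdens_meas (2*b))]
      refine mul_le_mul_right ?_ _
      have hg2b : ∫⁻ t, gdens (2*b) t ∂((gaussianReal 0 1).restrict A)
          = gaussianReal (2*b) 1 A := by
        rw [gaussian_tilt (2*b), withDensity_apply _ hA]
      rw [hg2b]
      have := tail_lower (m := 2*b) (y := b + η) (by linarith)
      rwa [show 2*b - (b+η) = b - η by ring] at this
    have hTsq : II^2 ≤ (ENNReal.ofReal T)^2 := by
      refine le_trans hCS2 (le_trans (mul_le_mul' hfirst hsecond) (le_of_eq ?_))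
      rw [← ENNReal.ofReal_mul (Real.exp_nonneg _), ← ENNReal.ofReal_mul (by positivity),
        ← ENNReal.ofReal_pow hT0]
      congr 1
      rw [hT, mul_pow, pow_two (Real.exp _), ← Real.exp_add, ← Real.exp_add]
      congr 2
      ring
    by_contra hcon
    push_neg at hcon
    exact absurd hTsq (not_le.2 (ENNReal.pow_lt_pow_left (by norm_num) hcon))
  -- step e : combine
  have hJ : ENNReal.ofReal (b*(1-e₁) - T) ≤ J := by
    calc ENNReal.ofReal (b*(1-e₁) - T) = ENNReal.ofReal (b*(1-e₁)) - ENNReal.ofReal T := by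
          rw [ENNReal.ofReal_sub _ hT0]
      _ ≤ ENNReal.ofReal b * ν A - II := by
          refine tsub_le_tsub ?_ stepd
          rw [ENNReal.ofReal_mul hb]
          exact mul_le_mul_right hνA _
      _ ≤ J := by
          rw [tsub_le_iff_right]
          exact le_trans stepa (add_le_add_left le_rfl _)
  calc ENNReal.ofReal ((b*(1-e₁) - T)^2) = (ENNReal.ofReal (b*(1-e₁) - T))^2 :=
        ENNReal.ofReal_pow hx 2
    _ ≤ J^2 := pow_le_pow_left' hJ 2
    _ ≤ gShiftRisk f b := stepb

lemma evt_exp_le {k K : ℝ} (hk : 0 < k) (hK : 0 < K) :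
    ∀ᶠ L in atTop, Real.exp (-(k*L)) ≤ K := by
  filter_upwards [eventually_ge_atTop (-Real.log K / k)] with L hL
  rw [div_le_iff₀ hk] at hL
  calc Real.exp (-(k*L)) ≤ Real.exp (Real.log K) := Real.exp_le_exp.2 (by nlinarith)
    _ = K := Real.exp_log hK

lemma eventually_conds (ε : ℝ) (hε : 0 < ε) (hε1 : ε ≤ 1) :
    ∀ᶠ L in atTop, 1 ≤ L ∧ Real.exp (-L) ≤ ε/32 ∧
      Real.exp (-(ε/8 * Real.sqrt (2*(1-ε/2)*L))^2/2) ≤ ε/16 ∧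
      Real.sqrt (4*L*Real.exp (-L)) *
        Real.exp ((Real.sqrt (2*(1-ε/2)*L))^2/2
          - (Real.sqrt (2*(1-ε/2)*L) - ε/8 * Real.sqrt (2*(1-ε/2)*L))^2/4)
        ≤ ε/16 * Real.sqrt (2*(1-ε/2)*L) := by
  have hu : (0:ℝ) < 1 - ε/2 := by linarith
  have hK4 : (0:ℝ) < ε/16 * Real.sqrt (2*(1-ε/2)) / Real.sqrt 4 := by positivity
  filter_upwards [eventually_ge_atTop (1:ℝ),
    evt_exp_le (k := 1) one_pos (K := ε/32) (by positivity),
    evt_exp_le (k := ε^2/128) (by positivity) (K := ε/16) (by positivity),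
    evt_exp_le (k := ε/8) (by positivity) hK4]
    with L h1 h2 h3 h4
  have hL0 : (0:ℝ) ≤ L := by linarith
  set b := Real.sqrt (2*(1-ε/2)*L) with hbdef
  have hb2 : b^2 = 2*(1-ε/2)*L := Real.sq_sqrt (by positivity)
  have hb0 : 0 ≤ b := Real.sqrt_nonneg _
  refine ⟨h1, by simpa using h2, ?_, ?_⟩
  · -- condition 2
    have hge : ε^2/128 * L ≤ (ε/8 * b)^2/2 := by nlinarith
    calc Real.exp (-(ε/8 * b)^2/2) ≤ Real.exp (-(ε^2/128 * L)) :=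
          Real.exp_le_exp.2 (by linarith)
      _ ≤ ε/16 := h3
  · -- condition 3
    have hS1 : 1 ≤ Real.sqrt L := by
      rw [show (1:ℝ) = Real.sqrt 1 by simp]
      exact Real.sqrt_le_sqrt h1
    have hS0 : 0 < Real.sqrt L := lt_of_lt_of_le one_pos hS1
    have hsplit : Real.sqrt (4*L*Real.exp (-L))
        = Real.sqrt 4 * Real.sqrt L * Real.exp (-L/2) := by
      rw [show (4*L*Real.exp (-L)) = 4*(L*Real.exp (-L)) by ring,
        Real.sqrt_mul (by norm_num), Real.sqrt_mul hL0, ← Real.exp_half, mul_assoc]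
    have hbsplit : b = Real.sqrt (2*(1-ε/2)) * Real.sqrt L := by
      rw [hbdef, show (2*(1-ε/2)*L) = (2*(1-ε/2))*L by ring, Real.sqrt_mul (by positivity)]
    have hE : b^2/2 - (b - ε/8 * b)^2/4
        = (2*(1-ε/2)*L)*(1/2 - (1-ε/8)^2/4) := by
      rw [← hb2]; ring
    have hEle : -L/2 + (b^2/2 - (b - ε/8 * b)^2/4) ≤ -(ε/8*L) := by
      rw [hE]; nlinarith [sq_nonneg ε, sq_nonneg (1-ε)]
    have hexp : Real.exp (-L/2) * Real.exp (b^2/2 - (b - ε/8 * b)^2/4)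
        ≤ Real.exp (-(ε/8*L)) := by
      rw [← Real.exp_add]; exact Real.exp_le_exp.2 hEle
    have hfin : Real.sqrt 4 * Real.exp (-(ε/8*L)) ≤ ε/16 * Real.sqrt (2*(1-ε/2)) := by
      have h3pos : (0:ℝ) < Real.sqrt 4 := by positivity
      calc Real.sqrt 4 * Real.exp (-(ε/8*L))
          ≤ Real.sqrt 4 * (ε/16 * Real.sqrt (2*(1-ε/2)) / Real.sqrt 4) :=
            mul_le_mul_of_nonneg_left h4 h3pos.le
        _ = ε/16 * Real.sqrt (2*(1-ε/2)) := by field_simp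
    calc Real.sqrt (4*L*Real.exp (-L)) * Real.exp (b^2/2 - (b - ε/8 * b)^2/4)
        = Real.sqrt 4 * (Real.exp (-L/2) * Real.exp (b^2/2 - (b - ε/8 * b)^2/4)) * Real.sqrt L := by
          rw [hsplit]; ring
      _ ≤ Real.sqrt 4 * Real.exp (-(ε/8*L)) * Real.sqrt L := by
          apply mul_le_mul_of_nonneg_right _ hS0.le
          exact mul_le_mul_of_nonneg_left hexp (by positivity)
      _ ≤ (ε/16 * Real.sqrt (2*(1-ε/2))) * Real.sqrt L :=
          mul_le_mul_of_nonneg_right hfin hS0.le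
      _ = ε/16 * b := by rw [hbsplit]; ring

lemma per_rho (g : ℝ → ℝ) (hg : Measurable g) (c L ε : ℝ) (hc0 : 0 < c) (hL1 : 1 ≤ L)
    (hε : 0 < ε) (hε1 : ε ≤ 1)
    (hcond2 : Real.exp (-(ε/8 * Real.sqrt (2*(1-ε/2)*L))^2/2) ≤ ε/16)
    (hcond3 : Real.sqrt (4*L*c) * Real.exp ((Real.sqrt (2*(1-ε/2)*L))^2/2
      - (Real.sqrt (2*(1-ε/2)*L) - ε/8 * Real.sqrt (2*(1-ε/2)*L))^2/4)
      ≤ ε/16 * Real.sqrt (2*(1-ε/2)*L))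
    (hr0 : gShiftRisk g 0 ≤ ENNReal.ofReal (4*L*c)) :
    ENNReal.ofReal (2*L*((1-ε/2)*(1-ε/8)^2)) ≤ gShiftRisk g (Real.sqrt (2*(1-ε/2)*L)) := by
  set b := Real.sqrt (2*(1-ε/2)*L) with hbdef
  have hb2 : b^2 = 2*(1-ε/2)*L := Real.sq_sqrt (by nlinarith)
  have hb0 : 0 ≤ b := Real.sqrt_nonneg _
  set R := Real.sqrt (4*L*c) with hRdef
  have hR0 : 0 ≤ R := Real.sqrt_nonneg _
  have hR2 : R^2 = 4*L*c := Real.sq_sqrt (by nlinarith)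
  have hr0' : gShiftRisk g 0 ≤ ENNReal.ofReal (R^2) := by rw [hR2]; exact hr0
  have hη0 : 0 ≤ ε/8*b := by positivity
  have hηb : ε/8*b ≤ b := by nlinarith
  have he1 : Real.exp (-(ε/8*b)^2/2) ≤ ε/16 := hcond2
  have hTb : R * Real.exp (b^2/2 - (b - ε/8*b)^2/4) ≤ ε/16*b := hcond3
  have hbe : b * Real.exp (-(ε/8*b)^2/2) ≤ b * (ε/16) :=
    mul_le_mul_of_nonneg_left he1 hb0
  have hx : 0 ≤ b*(1 - Real.exp (-(ε/8*b)^2/2)) - R * Real.exp (b^2/2 - (b-ε/8*b)^2/4) := by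
    nlinarith
  have hkey := key_lemma g hg b (ε/8*b) R hη0 hηb hR0 hr0' hx
  refine le_trans (ENNReal.ofReal_le_ofReal ?_) hkey
  have hxge : b*(1-ε/8) ≤ b*(1 - Real.exp (-(ε/8*b)^2/2))
      - R * Real.exp (b^2/2 - (b-ε/8*b)^2/4) := by nlinarith
  have hbny : 0 ≤ b*(1-ε/8) := by nlinarith
  calc 2*L*((1-ε/2)*(1-ε/8)^2) = (b*(1-ε/8))^2 := by rw [mul_pow, hb2]; ring
    _ ≤ _ := by nlinarith

lemma lif_aux (g : ℝ → ℝ≥0∞)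
    (hg : ∀ ε : ℝ, 0 < ε → ε ≤ 1 → ∀ᶠ ρ in rhoFilter, ENNReal.ofReal (1-ε) ≤ g ρ) :
    1 ≤ liminf g rhoFilter := by
  refine le_of_forall_lt_imp_le_of_dense fun a ha => ?_
  have haT : a ≠ ⊤ := ne_top_of_lt (lt_of_lt_of_le ha le_top)
  have hat1 : a.toReal < 1 := by
    have := (ENNReal.toReal_lt_toReal haT (by simp)).2 ha
    simpa using this
  have hε : 0 < 1 - a.toReal := by linarith
  have hε1 : 1 - a.toReal ≤ 1 := by
    have := ENNReal.toReal_nonneg (a := a); linarith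
  have ha' : ENNReal.ofReal (1 - (1 - a.toReal)) = a := by
    rw [show 1 - (1-a.toReal) = a.toReal by ring, ENNReal.ofReal_toReal haT]
  refine le_liminf_of_le (by isBoundedDefault) ?_
  filter_upwards [hg (1-a.toReal) hε hε1] with ρ hρ
  exact ha' ▸ hρ

set_option maxHeartbeats 1000000 in
/-- **Lower bounds as `|ρ| → 1` (Lemma on adaptation regret and worst-case risk).**
Suppose for each `ρ` a measurable estimator `δ ρ : ℝ → ℝ` is given whose worst-case
adaptation regret satisfies `limsup_{|ρ|↑1} A(δ ρ, ρ)/(2 log((ρ⁻²−1)⁻¹)) ≤ 1`.  Then: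
(i) `liminf_{|ρ|↑1} (sup_μ r(δ ρ, μ))/(2 log((ρ⁻²−1)⁻¹)) ≥ 1`, so for any `Σ_U > 0` the
worst-case risk `Σ_U·(ρ²·sup_μ r(δ ρ, μ) + 1 − ρ²)` of the corresponding estimator in the
bivariate Gaussian model is bounded below by a `(1 + o(1))` term times
`2·Σ_U·log((ρ⁻²−1)⁻¹)`; and (ii) `liminf_{|ρ|↑1} A(δ ρ, ρ)/(2 log((ρ⁻²−1)⁻¹)) ≥ 1`. -/
theorem stmt_12 (δ : ℝ → ℝ → ℝ) (hmeas : ∀ ρ, Measurable (δ ρ))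
    (h : limsup (fun ρ : ℝ => adaptObj ρ (δ ρ) / denomLog ρ) rhoFilter ≤ 1) :
    (1 ≤ liminf (fun ρ : ℝ => (⨆ μ : ℝ, gShiftRisk (δ ρ) μ) / denomLog ρ) rhoFilter) ∧
    (∀ sU : ℝ, 0 < sU →
      1 ≤ liminf (fun ρ : ℝ =>
        (ENNReal.ofReal (sU * ρ ^ 2) * (⨆ μ : ℝ, gShiftRisk (δ ρ) μ)
            + ENNReal.ofReal (sU * (1 - ρ ^ 2)))
          / ENNReal.ofReal (2 * sU * Real.log (((ρ ^ 2)⁻¹ - 1)⁻¹))) rhoFilter) ∧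
    (1 ≤ liminf (fun ρ : ℝ => adaptObj ρ (δ ρ) / denomLog ρ) rhoFilter) := by
  have habs : Tendsto (fun ρ : ℝ => |ρ|) rhoFilter (𝓝[<] (1:ℝ)) := tendsto_comap
  have hcf : Tendsto (fun x : ℝ => (x^2)⁻¹ - 1) (𝓝[<] (1:ℝ)) (𝓝[>] (0:ℝ)) := by
    rw [tendsto_nhdsWithin_iff]
    constructor
    · have hcont : ContinuousAt (fun x : ℝ => (x^2)⁻¹ - 1) 1 :=
        (((continuous_pow 2).continuousAt).inv₀ (by norm_num)).sub continuousAt_const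
      have h2 := hcont.tendsto.mono_left (nhdsWithin_le_nhds (s := Set.Iio (1:ℝ)))
      simpa using h2
    · filter_upwards [Ioo_mem_nhdsLT_of_mem (show (1:ℝ) ∈ Set.Ioc 0 1 by norm_num)] with x hx
      have hx2 : 0 < x^2 := pow_pos hx.1 2
      have hx1 : x^2 < 1 := by nlinarith [hx.1, hx.2]
      simp only [Set.mem_Ioi, sub_pos]
      exact one_lt_inv_iff₀.2 ⟨hx2, hx1⟩
  have hc : Tendsto (fun ρ : ℝ => ((ρ:ℝ)^2)⁻¹ - 1) rhoFilter (𝓝[>] (0:ℝ)) := by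
    have h2 := hcf.comp habs
    have heq : (fun x : ℝ => (x^2)⁻¹ - 1) ∘ (fun ρ : ℝ => |ρ|)
        = fun ρ : ℝ => ((ρ:ℝ)^2)⁻¹ - 1 := by
      funext ρ; simp [Function.comp, sq_abs]
    rwa [heq] at h2
  have hLten : Tendsto (fun ρ : ℝ => Real.log ((((ρ:ℝ)^2)⁻¹ - 1)⁻¹)) rhoFilter atTop :=
    (Real.tendsto_log_atTop.comp tendsto_inv_nhdsGT_zero).comp hc
  have hcpos : ∀ᶠ ρ in rhoFilter, (0:ℝ) < ((ρ:ℝ)^2)⁻¹ - 1 :=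
    hc.eventually eventually_mem_nhdsWithin
  have H1 : ∀ᶠ ρ in rhoFilter, adaptObj ρ (δ ρ) / denomLog ρ < 2 :=
    eventually_lt_of_limsup_lt (lt_of_le_of_lt h ENNReal.one_lt_two)
  have master : ∀ ε : ℝ, 0 < ε → ε ≤ 1 → ∀ᶠ ρ in rhoFilter,
      (ENNReal.ofReal (1-ε) ≤ (⨆ μ : ℝ, gShiftRisk (δ ρ) μ) / denomLog ρ) ∧
      (∀ sU : ℝ, 0 < sU → ENNReal.ofReal (1-ε) ≤
        (ENNReal.ofReal (sU * ρ^2) * (⨆ μ : ℝ, gShiftRisk (δ ρ) μ)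
          + ENNReal.ofReal (sU * (1 - ρ^2)))
          / ENNReal.ofReal (2*sU*Real.log (((ρ^2)⁻¹-1)⁻¹))) ∧
      (ENNReal.ofReal (1-ε) ≤ adaptObj ρ (δ ρ) / denomLog ρ) := by
    intro ε hε hε1
    filter_upwards [hcpos, H1, hLten.eventually (eventually_conds ε hε hε1)]
      with ρ hc0 hH1 hconds
    obtain ⟨hL1, hcexp32, hcond2, hcond3⟩ := hconds
    set c : ℝ := (ρ^2)⁻¹ - 1 with hcdef
    set L : ℝ := Real.log (c⁻¹) with hLdef
    have hL0 : (0:ℝ) < L := lt_of_lt_of_le one_pos hL1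
    have hcexp : Real.exp (-L) = c := by
      rw [hLdef, Real.log_inv, neg_neg, Real.exp_log hc0]
    have hcε : c ≤ ε/32 := by rw [← hcexp]; exact hcexp32
    rw [hcexp] at hcond3
    have hden : denomLog ρ = ENNReal.ofReal (2*L) := by rw [hLdef, hcdef]; rfl
    have hd0 : ENNReal.ofReal (2*L) ≠ 0 := by
      rw [Ne, ENNReal.ofReal_eq_zero, not_le]; linarith
    have hadapt : adaptObj ρ (δ ρ) ≤ ENNReal.ofReal (4*L) := by
      have h2 := (ENNReal.div_le_iff (hden ▸ hd0) (hden ▸ ENNReal.ofReal_ne_top)).1 hH1.le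
      refine le_trans h2 ?_
      rw [hden, show (2:ℝ≥0∞) = ENNReal.ofReal 2 by simp,
        ← ENNReal.ofReal_mul (by norm_num)]
      exact ENNReal.ofReal_le_ofReal (by nlinarith)
    have hsupb : ∀ bb : ℝ, (gShiftRisk (δ ρ) bb + ENNReal.ofReal c)
        / (rBNM |bb| + ENNReal.ofReal c) ≤ adaptObj ρ (δ ρ) := by
      intro bb
      rw [hcdef]
      exact le_iSup (fun b : ℝ => (gShiftRisk (δ ρ) b + ENNReal.ofReal ((ρ^2)⁻¹-1))
        / (rBNM |b| + ENNReal.ofReal ((ρ^2)⁻¹-1))) bb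
    have hc'0 : (ENNReal.ofReal c) ≠ 0 := by
      rw [Ne, ENNReal.ofReal_eq_zero, not_le]; exact hc0
    have hr0 : gShiftRisk (δ ρ) 0 ≤ ENNReal.ofReal (4*L*c) := by
      have h3 := hsupb 0
      rw [abs_zero, rBNM_zero, zero_add] at h3
      have h4 := (ENNReal.div_le_iff hc'0 ENNReal.ofReal_ne_top).1 (le_trans h3 hadapt)
      refine le_trans (self_le_add_right _ _) (le_trans h4 ?_)
      rw [← ENNReal.ofReal_mul (by positivity)]
    have hmain := per_rho (δ ρ) (hmeas ρ) c L ε hc0 hL1 hε hε1 hcond2 hcond3 hr0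
    set b : ℝ := Real.sqrt (2*(1-ε/2)*L) with hbdef
    set Q : ℝ := 2*L*((1-ε/2)*(1-ε/8)^2) with hQdef
    have hW0 : (0:ℝ) ≤ (1-ε/2)*(1-ε/8)^2 := by nlinarith
    have hQ0 : (0:ℝ) ≤ Q := by rw [hQdef]; nlinarith
    have hsupμ : ENNReal.ofReal Q ≤ ⨆ μ : ℝ, gShiftRisk (δ ρ) μ :=
      le_trans hmain (le_iSup (fun μ => gShiftRisk (δ ρ) μ) b)
    have hρ2pos : ρ^2 ≠ 0 := by
      intro h0
      have h5 : (0:ℝ) < (ρ^2)⁻¹ - 1 := hc0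
      rw [h0] at h5; norm_num at h5
    have hinv : (ρ^2)⁻¹ = 1 + c := by rw [hcdef]; ring
    have hmul1 : ρ^2 * (1+c) = 1 := by rw [← hinv]; exact mul_inv_cancel₀ hρ2pos
    have hsq : (0:ℝ) ≤ ρ^2 := sq_nonneg ρ
    have hρlow : 1 - c ≤ ρ^2 := by nlinarith
    clear_value c L b Q
    refine ⟨?_, ?_, ?_⟩
    · rw [hden, ENNReal.le_div_iff_mul_le (Or.inl hd0) (Or.inl ENNReal.ofReal_ne_top)]
      calc ENNReal.ofReal (1-ε) * ENNReal.ofReal (2*L)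
          = ENNReal.ofReal ((1-ε)*(2*L)) := (ENNReal.ofReal_mul (by linarith)).symm
        _ ≤ ENNReal.ofReal Q := by
            apply ENNReal.ofReal_le_ofReal
            rw [hQdef]
            have hcube : ε^3 ≤ ε^2 := by nlinarith
            have h1 : (0:ℝ) ≤ (1-ε/2)*(1-ε/8)^2 - (1-ε) := by nlinarith
            nlinarith [mul_nonneg hL0.le h1]
        _ ≤ _ := hsupμ
    · intro sU hsU
      have hdU : ENNReal.ofReal (2*sU*L) ≠ 0 := by
        rw [Ne, ENNReal.ofReal_eq_zero, not_le]
        exact mul_pos (mul_pos two_pos hsU) hL0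
      rw [ENNReal.le_div_iff_mul_le (Or.inl hdU) (Or.inl ENNReal.ofReal_ne_top)]
      have hcube : ε^3 ≤ ε^2 := by nlinarith
      have hW1 : (1-ε/2)*(1-ε/8)^2 ≤ 1 := by nlinarith
      have hgap : (1-ε) + ε/32 ≤ (1-ε/2)*(1-ε/8)^2 := by nlinarith
      have hcoef : (1-ε) ≤ (1-ε/32)*((1-ε/2)*(1-ε/8)^2) := by nlinarith
      have h6 : (1-ε/32) ≤ ρ^2 := by linarith
      have h7 : (1-ε)*(2*sU*L) ≤ sU*ρ^2 * Q := by
        have h8 : (1-ε) ≤ ρ^2*((1-ε/2)*(1-ε/8)^2) :=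
          le_trans hcoef (mul_le_mul_of_nonneg_right h6 hW0)
        have h9 : (1-ε)*(2*sU*L) ≤ ρ^2*((1-ε/2)*(1-ε/8)^2)*(2*sU*L) :=
          mul_le_mul_of_nonneg_right h8 (by positivity)
        calc (1-ε)*(2*sU*L) ≤ ρ^2*((1-ε/2)*(1-ε/8)^2)*(2*sU*L) := h9
          _ = sU*ρ^2 * Q := by rw [hQdef]; ring
      calc ENNReal.ofReal (1-ε) * ENNReal.ofReal (2*sU*L)
          = ENNReal.ofReal ((1-ε)*(2*sU*L)) := (ENNReal.ofReal_mul (by linarith)).symm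
        _ ≤ ENNReal.ofReal (sU*ρ^2 * Q) := ENNReal.ofReal_le_ofReal h7
        _ = ENNReal.ofReal (sU*ρ^2) * ENNReal.ofReal Q :=
            ENNReal.ofReal_mul (mul_nonneg hsU.le hsq)
        _ ≤ ENNReal.ofReal (sU*ρ^2) * (⨆ μ : ℝ, gShiftRisk (δ ρ) μ) :=
            mul_le_mul_right hsupμ _
        _ ≤ _ := self_le_add_right _ _
    · have hrb : ENNReal.ofReal Q ≤ gShiftRisk (δ ρ) b + ENNReal.ofReal c :=
        le_trans hmain (self_le_add_right _ _)
      have hdenb : rBNM |b| + ENNReal.ofReal c ≤ ENNReal.ofReal (1 + ε/32 + c) := by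
        calc rBNM |b| + ENNReal.ofReal c
            ≤ ENNReal.ofReal (1 + ε/32) + ENNReal.ofReal c :=
              add_le_add_left (rBNM_le_one_add (by positivity) (by linarith)) _
          _ = ENNReal.ofReal (1 + ε/32 + c) := (ENNReal.ofReal_add (by linarith) hc0.le).symm
      have hpos1 : (0:ℝ) < 1 + ε/32 + c := by linarith
      have hterm : ENNReal.ofReal ((1-ε)*(2*L))
          ≤ (gShiftRisk (δ ρ) b + ENNReal.ofReal c) / (rBNM |b| + ENNReal.ofReal c) := by
        refine le_trans ?_ (ENNReal.div_le_div hrb hdenb)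
        rw [← ENNReal.ofReal_div_of_pos hpos1]
        apply ENNReal.ofReal_le_ofReal
        rw [le_div_iff₀ hpos1, hQdef]
        have hcube : ε^3 ≤ ε^2 := by nlinarith
        have hA : (1-ε)*(1+ε/32+c) ≤ (1-ε/2)*(1-ε/8)^2 := by
          nlinarith [hcε, hε.le, hε1, hc0.le, hcube, mul_nonneg hε.le hc0.le]
        nlinarith [mul_le_mul_of_nonneg_left hA (show (0:ℝ) ≤ 2*L by linarith)]
      rw [hden, ENNReal.le_div_iff_mul_le (Or.inl hd0) (Or.inl ENNReal.ofReal_ne_top)]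
      calc ENNReal.ofReal (1-ε) * ENNReal.ofReal (2*L)
          = ENNReal.ofReal ((1-ε)*(2*L)) := (ENNReal.ofReal_mul (by linarith)).symm
        _ ≤ _ := le_trans hterm (hsupb b)
  exact ⟨lif_aux _ (fun ε hε hε1 => (master ε hε hε1).mono fun ρ hρ => hρ.1),
    fun sU hsU => lif_aux _ (fun ε hε hε1 => (master ε hε hε1).mono fun ρ hρ => hρ.2.1 sU hsU),
    lif_aux _ (fun ε hε hε1 => (master ε hε hε1).mono fun ρ hρ => hρ.2.2)⟩
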